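/- arXiv:1701.05714 — 4 statements merged into one kernel-verified Lean document; each statement's English description precedes it below -/
import Mathlib

section
/- Let θ be a positive irrational number. Then for every ε > 0 there exist m, m̃ ∈ ℕ₀ and n, ñ ∈ ℕ with (m, n) ≠ (m̃, ñ) such that 0 < |θ·m + n² − (θ·m̃ + ñ²)| < ε. In particular, the gaps between the numbers θ·m + n² have no positive lower bound. -/
/-- For irrational `θ > 0`, the gaps between the numbers `θ·m + n²`
(`m ∈ ℕ₀`, `n ∈ ℕ`) have no positive lower bound. -/
theorem flat_layer_small_gaps (θ : ℝ) (hθ : 0 < θ) (hirr : Irrational θ) :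
    ∀ ε : ℝ, 0 < ε → ∃ m m' n n' : ℕ, 0 < n ∧ 0 < n' ∧ (m, n) ≠ (m', n') ∧
      0 < |θ * m + (n : ℝ) ^ 2 - (θ * m' + (n' : ℝ) ^ 2)| ∧
      |θ * m + (n : ℝ) ^ 2 - (θ * m' + (n' : ℝ) ^ 2)| < ε := by
  intro ε hε
  -- choose N with 1/(N+1) < min (ε/8) (θ/2)
  obtain ⟨N, hN⟩ := exists_nat_gt (max (8 / ε) (2 / θ))
  have hN1 : 0 < N := by
    by_contra h
    push_neg at h
    interval_cases N
    simp at hN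
    rcases hN with ⟨h1, h2⟩
    have : 0 < 8 / ε := by positivity
    linarith
  obtain ⟨j, k, hk0, hkN, hjk⟩ := Real.exists_int_int_abs_mul_sub_le θ hN1
  have hNe : (N : ℝ) > 8 / ε := lt_of_le_of_lt (le_max_left _ _) hN
  have hNt : (N : ℝ) > 2 / θ := lt_of_le_of_lt (le_max_right _ _) hN
  have hsmall : |(k : ℝ) * θ - j| < min (ε / 8) (θ / 2) := by
    refine lt_of_le_of_lt hjk ?_
    rw [lt_min_iff]
    constructor
    · rw [div_lt_div_iff₀ (by positivity) (by norm_num)]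
      nlinarith [(div_lt_iff₀ hε).mp hNe]
    · rw [div_lt_div_iff₀ (by positivity) (by norm_num)]
      nlinarith [(div_lt_iff₀ hθ).mp hNt]
  -- j ≥ 1
  have hkθ : (k : ℝ) * θ ≥ θ := by
    have : (1 : ℝ) ≤ (k : ℝ) := by exact_mod_cast hk0
    nlinarith
  have hj1 : (1 : ℤ) ≤ j := by
    by_contra h
    push_neg at h
    have hj0 : (j : ℝ) ≤ 0 := by exact_mod_cast Int.lt_add_one_iff.mp h
    have h2 : |(k : ℝ) * θ - j| ≥ θ := by
      rw [abs_of_nonneg (by linarith)]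
      linarith
    have := lt_of_le_of_lt h2 (lt_of_lt_of_le hsmall (min_le_right _ _))
    linarith
  set q := k.toNat with hq
  set p := j.toNat with hp
  have hqk : (q : ℝ) = (k : ℝ) := by exact_mod_cast Int.toNat_of_nonneg hk0.le
  have hpj : (p : ℝ) = (j : ℝ) := by
    exact_mod_cast Int.toNat_of_nonneg (by linarith : (0:ℤ) ≤ j)
  have hp1 : 1 ≤ p := by omega
  have hne : (k : ℝ) * θ - j ≠ 0 := by
    intro h
    have hθeq : θ = (j : ℝ) / (k : ℝ) := by
      have hk : (k : ℝ) ≠ 0 := by positivity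
      field_simp
      nlinarith [sub_eq_zero.mp h]
    have : Irrational ((j : ℝ) / (k : ℝ)) := hθeq ▸ hirr
    rw [show ((j:ℝ)/(k:ℝ)) = ((j/k : ℚ) : ℝ) by push_cast; ring] at this
    exact (Rat.not_irrational _) this
  have hcast : ((2 * p - 1 : ℕ) : ℝ) = 2 * (p : ℝ) - 1 := by
    push_cast [Nat.cast_sub (by omega : 1 ≤ 2 * p)]; ring
  have key : θ * ((0:ℕ):ℝ) + ((2 * p + 1 : ℕ) : ℝ) ^ 2 -
      (θ * ((8 * q : ℕ) : ℝ) + ((2 * p - 1 : ℕ) : ℝ) ^ 2) =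
      -8 * ((k : ℝ) * θ - j) := by
    rw [hcast]
    push_cast
    rw [← hqk, ← hpj]
    ring
  refine ⟨0, 8 * q, 2 * p + 1, 2 * p - 1, by omega, by omega, ?_, ?_, ?_⟩
  · simp only [ne_eq, Prod.mk.injEq, not_and]
    intro _; omega
  · rw [key]
    have : (k : ℝ) * θ - j ≠ 0 := hne
    positivity
  · rw [key, abs_mul, abs_of_nonpos (by norm_num : (-8:ℝ) ≤ 0)]
    have := lt_of_lt_of_le hsmall (min_le_left _ _)
    nlinarith [abs_nonneg ((k:ℝ) * θ - j)]
end

section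
/- Let 0 < α₊ < α₋ ≤ 1 and define ε₀ := (α₋² − α₊²)/(α₊√(1−α₊²) + α₋√(1−α₋²)) (interpreted as +∞ if the denominator vanishes). Define g(α, ε) := √(α² + α√(1−α²)·ε). Then for every ε with 0 < ε < ε₀, one has g(α₋, −ε) > g(α₊, ε). -/
/-- For `0 < α₊ < α₋ ≤ 1`, with
`ε₀ = (α₋² − α₊²)/(α₊√(1−α₊²) + α₋√(1−α₋²))` and
`g(α,ε) = √(α² + α√(1−α²)ε)`, one has `g(α₋,−ε) > g(α₊,ε)` for all `0 < ε < ε₀`. -/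
theorem effective_field_gap (αp αm : ℝ) (h1 : 0 < αp) (h2 : αp < αm) (h3 : αm ≤ 1)
    (ε : ℝ) (hε : 0 < ε)
    (hε0 : ε < (αm ^ 2 - αp ^ 2) /
      (αp * Real.sqrt (1 - αp ^ 2) + αm * Real.sqrt (1 - αm ^ 2))) :
    Real.sqrt (αp ^ 2 + αp * Real.sqrt (1 - αp ^ 2) * ε) <
      Real.sqrt (αm ^ 2 + αm * Real.sqrt (1 - αm ^ 2) * (-ε)) := by
  have hap1 : αp < 1 := lt_of_lt_of_le h2 h3
  have ha : 0 < αp * Real.sqrt (1 - αp ^ 2) :=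
    mul_pos h1 (Real.sqrt_pos.mpr (by nlinarith))
  have hb : 0 ≤ αm * Real.sqrt (1 - αm ^ 2) :=
    mul_nonneg (by linarith) (Real.sqrt_nonneg _)
  have hden : 0 < αp * Real.sqrt (1 - αp ^ 2) + αm * Real.sqrt (1 - αm ^ 2) := by linarith
  have key : ε * (αp * Real.sqrt (1 - αp ^ 2) + αm * Real.sqrt (1 - αm ^ 2)) <
      αm ^ 2 - αp ^ 2 := (lt_div_iff₀ hden).mp hε0
  apply Real.sqrt_lt_sqrt (by nlinarith)
  nlinarith
end

section
/- Let B₀ > 0, let ψ₀(u) = (B₀/π)^{1/4} e^{−B₀u²/2} be the harmonic oscillator ground state, and set ψ̃(u) := ψ₀(u) − ψ₀(1) for u ∈ I := (−1,1). Then ψ̃ ≥ 0 on I, ψ̃ ∈ H¹₀(I), and the Rayleigh quotient of ψ̃ for the operator −d²/du² + B₀²u² on I satisfies ⟨ψ̃, (−ψ̃'' + B₀²u²ψ̃)⟩_I / ‖ψ̃‖²_I ≤ B₀ + B₀ψ₀(1)·|I|^{1/2}/‖ψ̃‖_I. -/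
open MeasureTheory

/-!
Since `ψ₀` solves `-ψ₀'' + B₀²u²ψ₀ = B₀ψ₀` and `ψ̃` differs from it by a constant,
`-ψ̃'' + B₀²u²ψ̃ = B₀ψ̃ + B₀ψ₀(1) - B₀²u²ψ₀(1) ≤ B₀ψ̃ + B₀ψ₀(1)` on all of `ℝ`. Multiplying by
`ψ̃ ≥ 0` and integrating over `I` bounds the numerator of the Rayleigh quotient by
`B₀‖ψ̃‖² + B₀ψ₀(1)∫_I ψ̃`, and Cauchy–Schwarz gives `∫_I ψ̃ ≤ |I|^{1/2}‖ψ̃‖`.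
-/

section

variable {α : Type*} [MeasurableSpace α] {μ : Measure α} {s : Set α} {f : α → ℝ}

theorem sq_setIntegral_le_measureReal_mul_setIntegral_sq (hs : μ s ≠ ⊤)
    (hf : IntegrableOn f s μ) (hf2 : IntegrableOn (fun x => f x ^ 2) s μ) :
    (∫ x in s, f x ∂μ) ^ 2 ≤ μ.real s * ∫ x in s, f x ^ 2 ∂μ := by
  have hconst : ∀ c : ℝ, IntegrableOn (fun _ => c) s μ := fun c => integrableOn_const hs
  -- `c ↦ ∫ (f - c)²` is a nonnegative quadratic, so its discriminant is nonpositive.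
  have hquad : ∀ c : ℝ, 0 ≤ μ.real s * (c * c) + (-2 * ∫ x in s, f x ∂μ) * c +
      ∫ x in s, f x ^ 2 ∂μ := by
    intro c
    have hexpand : ∫ x in s, (f x - c) ^ 2 ∂μ =
        μ.real s * (c * c) + (-2 * ∫ x in s, f x ∂μ) * c + ∫ x in s, f x ^ 2 ∂μ := by
      have : (fun x => (f x - c) ^ 2) = fun x => f x ^ 2 - 2 * c * f x + c ^ 2 := by
        funext x; ring
      have hlin : IntegrableOn (fun x => f x ^ 2 - 2 * c * f x) s μ := hf2.sub (hf.const_mul _)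
      rw [this, integral_add hlin (hconst _), integral_sub hf2 (hf.const_mul _),
        integral_const_mul, setIntegral_const, smul_eq_mul]
      ring
    exact hexpand ▸ integral_nonneg fun x => sq_nonneg _
  have hdisc := discrim_le_zero hquad
  rw [discrim] at hdisc
  linarith

theorem setIntegral_mul_div_setIntegral_sq_le {φ h : α → ℝ} {B c : ℝ} (hs : MeasurableSet s)
    (hμs : μ s ≠ ⊤) (hB : 0 ≤ B) (hc : 0 ≤ c) (hφ : ∀ x ∈ s, 0 ≤ φ x)
    (hh : ∀ x ∈ s, h x ≤ B * φ x + c) (hφi : IntegrableOn φ s μ)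
    (hφ2 : IntegrableOn (fun x => φ x ^ 2) s μ) (hφh : IntegrableOn (fun x => φ x * h x) s μ) :
    (∫ x in s, φ x * h x ∂μ) / (∫ x in s, φ x ^ 2 ∂μ) ≤
      B + c * √(μ.real s) / √(∫ x in s, φ x ^ 2 ∂μ) := by
  rcases (integral_nonneg fun x => sq_nonneg (φ x) : 0 ≤ ∫ x in s, φ x ^ 2 ∂μ).eq_or_lt
    with hN | hN
  · rw [← hN, div_zero, Real.sqrt_zero, div_zero, add_zero]; exact hB
  set N := ∫ x in s, φ x ^ 2 ∂μ
  have hA : ∫ x in s, φ x * h x ∂μ ≤ B * N + c * ∫ x in s, φ x ∂μ := by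
    calc ∫ x in s, φ x * h x ∂μ ≤ ∫ x in s, B * φ x ^ 2 + c * φ x ∂μ := by
          refine setIntegral_mono_on hφh ((hφ2.const_mul B).add (hφi.const_mul c)) hs
            fun x hx => ?_
          calc φ x * h x ≤ φ x * (B * φ x + c) := mul_le_mul_of_nonneg_left (hh x hx) (hφ x hx)
            _ = B * φ x ^ 2 + c * φ x := by ring
      _ = B * N + c * ∫ x in s, φ x ∂μ := by
          rw [integral_add (hφ2.const_mul B) (hφi.const_mul c), integral_const_mul,
            integral_const_mul]
  have hF : ∫ x in s, φ x ∂μ ≤ √(μ.real s) * √N := by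
    rw [← Real.sqrt_mul measureReal_nonneg]
    exact (le_abs_self _).trans
      (Real.abs_le_sqrt (sq_setIntegral_le_measureReal_mul_setIntegral_sq hμs hφi hφ2))
  rw [div_le_iff₀ hN]
  calc ∫ x in s, φ x * h x ∂μ ≤ B * N + c * (√(μ.real s) * √N) := by
        nlinarith [mul_le_mul_of_nonneg_left hF hc]
    _ = (B + c * √(μ.real s) / √N) * N := by
        rw [add_mul, div_mul_eq_mul_div, mul_div_assoc, Real.div_sqrt]
        ring

end

section Gaussian

open Real

variable (B C : ℝ)

theorem hasDerivAt_gaussian (u : ℝ) :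
    HasDerivAt (fun v => C * exp (-B * v ^ 2 / 2)) (-B * u * (C * exp (-B * u ^ 2 / 2))) u := by
  have hexp : HasDerivAt (fun v => -B * v ^ 2 / 2) (-B * u) u :=
    (((hasDerivAt_pow 2 u).const_mul (-B)).div_const 2).congr_deriv (by push_cast; ring)
  exact (hexp.exp.const_mul C).congr_deriv (by ring)

theorem deriv_gaussian :
    deriv (fun v => C * exp (-B * v ^ 2 / 2)) = fun u => -B * u * (C * exp (-B * u ^ 2 / 2)) :=
  funext fun u => (hasDerivAt_gaussian B C u).deriv

/-- That is, `-g'' + B²u² g = B g`: the Gaussian is the ground state of `-d²/du² + B²u²`. -/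
theorem deriv_deriv_gaussian (u : ℝ) :
    deriv (deriv fun v => C * exp (-B * v ^ 2 / 2)) u =
      (B ^ 2 * u ^ 2 - B) * (C * exp (-B * u ^ 2 / 2)) := by
  rw [deriv_gaussian]
  have hlin : HasDerivAt (fun v : ℝ => -B * v) (-B) u := by
    simpa using (hasDerivAt_id u).const_mul (-B)
  exact ((hlin.mul (hasDerivAt_gaussian B C u)).congr_deriv (by ring)).deriv

variable {B C}

theorem gaussian_le_gaussian (hB : 0 ≤ B) (hC : 0 ≤ C) {u v : ℝ} (huv : u ^ 2 ≤ v ^ 2) :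
    C * exp (-B * v ^ 2 / 2) ≤ C * exp (-B * u ^ 2 / 2) :=
  mul_le_mul_of_nonneg_left (exp_le_exp.2 (by nlinarith)) hC

end Gaussian

/-- with `ψ₀` the normalized oscillator ground state and
`ψ̃ = ψ₀ − ψ₀(1)`, the function `ψ̃` is nonnegative on `[−1,1]`, vanishes at `±1`
(so belongs to `H¹₀((−1,1))`), and its Rayleigh quotient for `−d²/du² + B₀²u²` on
`I = (−1,1)` is at most `B₀ + B₀ψ₀(1)|I|^{1/2}/‖ψ̃‖_I`. -/
theorem shifted_gaussian_rayleigh (B₀ : ℝ) (hB : 0 < B₀) (ψ₀ ψt : ℝ → ℝ)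
    (hψ₀ : ψ₀ = fun u => (B₀ / Real.pi) ^ ((1 : ℝ) / 4) * Real.exp (-B₀ * u ^ 2 / 2))
    (hψt : ψt = fun u => ψ₀ u - ψ₀ 1) :
    (∀ u ∈ Set.Icc (-1 : ℝ) 1, 0 ≤ ψt u) ∧ ψt (-1) = 0 ∧ ψt 1 = 0 ∧
    (∫ u in Set.Ioo (-1 : ℝ) 1, ψt u * (-(deriv (deriv ψt)) u + B₀ ^ 2 * u ^ 2 * ψt u)) /
        (∫ u in Set.Ioo (-1 : ℝ) 1, (ψt u) ^ 2) ≤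
      B₀ + B₀ * ψ₀ 1 * Real.sqrt 2 /
        Real.sqrt (∫ u in Set.Ioo (-1 : ℝ) 1, (ψt u) ^ 2) := by
  have hC : 0 ≤ (B₀ / Real.pi) ^ ((1 : ℝ) / 4) := by positivity
  have hψ₀1 : 0 ≤ ψ₀ 1 := by rw [hψ₀]; positivity
  have hψt_nonneg : ∀ u ∈ Set.Icc (-1 : ℝ) 1, 0 ≤ ψt u := fun u hu => by
    have : u ^ 2 ≤ 1 ^ 2 := by nlinarith [hu.1, hu.2]
    simpa [hψt, hψ₀] using gaussian_le_gaussian hB.le hC this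
  have hH : ∀ u, -(deriv (deriv ψt)) u + B₀ ^ 2 * u ^ 2 * ψt u =
      B₀ * ψ₀ u - B₀ ^ 2 * u ^ 2 * ψ₀ 1 := by
    intro u
    rw [hψt, deriv_sub_const_fun, hψ₀, deriv_deriv_gaussian]
    beta_reduce
    ring
  have hψ₀c : Continuous ψ₀ := hψ₀ ▸ by fun_prop
  have hψtc : Continuous ψt := hψt ▸ by fun_prop
  have hintegrable : ∀ {f : ℝ → ℝ}, Continuous f → IntegrableOn f (Set.Ioo (-1 : ℝ) 1) :=
    fun hf => hf.integrableOn_Icc.mono_set Set.Ioo_subset_Icc_self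
  refine ⟨hψt_nonneg, by simp [hψt, hψ₀], by simp [hψt], ?_⟩
  simp_rw [hH]
  calc _ ≤ B₀ + B₀ * ψ₀ 1 * √(volume.real (Set.Ioo (-1 : ℝ) 1)) /
        √(∫ u in Set.Ioo (-1 : ℝ) 1, (ψt u) ^ 2) :=
        setIntegral_mul_div_setIntegral_sq_le measurableSet_Ioo measure_Ioo_lt_top.ne hB.le
          (by positivity) (fun u hu => hψt_nonneg u (Set.Ioo_subset_Icc_self hu))
          (fun u _ => by
            have : 0 ≤ B₀ ^ 2 * u ^ 2 * ψ₀ 1 := by positivity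
            simp only [hψt]; linarith)
          (hintegrable hψtc) (hintegrable (hψtc.pow 2)) (hintegrable (by fun_prop))
    _ = _ := by rw [Real.volume_real_Ioo]; norm_num
end

section
/- Let B₀ > 0 and let μ(B₀,1) be the lowest eigenvalue of the harmonic oscillator −d²/du² + B₀²u² with Dirichlet boundary conditions on (−1,1). Then B₀ < μ(B₀,1) ≤ B₀ + (1+δ)·(√2/π^{1/4})·B₀^{5/4} e^{−B₀/2} for any fixed δ > 0 and all B₀ sufficiently large; in particular μ(B₀,1) = B₀ + O(B₀^{5/4} e^{−B₀/2}) as B₀ → +∞. -/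
open MeasureTheory Filter

/-!
The substitution `ψ'² + B²u²ψ² = (ψ' + Buψ)² + Bψ² − (Buψ²)'` shows that a normalized Dirichlet
function has energy `B + ε` with `ε = ∫ (ψ' + Buψ)²`. Since `(ψ e^{Bu²/2})' = (ψ' + Buψ) e^{Bu²/2}`
and `ψ(1) = 0`, Cauchy–Schwarz gives `ψ² ≤ 2 e^B ε` pointwise, hence `ε ≥ e^{-B}/4`. For the
upper bound, the Gaussian `e^{-Bu²/2}` cut off smoothly between `|u| = 3/4` and `|u| = 1` has
`ε` of order `√B e^{-9B/16}`, which is `o(B^{5/4} e^{-B/2})`.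
-/

/-- The lowest Dirichlet eigenvalue `μ(B₀,1)` of `−d²/du² + B₀²u²` on `(−1,1)`, as the
infimum of the Rayleigh quotient over normalized `H¹₀((−1,1))` test functions. -/
noncomputable def dirichletHOGroundEnergy (B₀ : ℝ) : ℝ :=
  sInf {E : ℝ | ∃ ψ : ℝ → ℝ, ContDiff ℝ 1 ψ ∧ (∀ u : ℝ, 1 ≤ |u| → ψ u = 0) ∧
    (∫ u in Set.Ioo (-1 : ℝ) 1, (ψ u) ^ 2) = 1 ∧
    E = ∫ u in Set.Ioo (-1 : ℝ) 1, ((deriv ψ u) ^ 2 + B₀ ^ 2 * u ^ 2 * (ψ u) ^ 2)}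

open Real Set Topology

lemma integral_Ioo_neg_one_one (f : ℝ → ℝ) :
    ∫ u in Ioo (-1 : ℝ) 1, f u = ∫ u in (-1 : ℝ)..1, f u := by
  rw [intervalIntegral.integral_of_le (by norm_num), integral_Ioc_eq_integral_Ioo]

lemma sq_intervalIntegral_le {f : ℝ → ℝ} (hf : Continuous f) {a b : ℝ} (hab : a ≤ b) :
    (∫ x in a..b, f x) ^ 2 ≤ (b - a) * ∫ x in a..b, f x ^ 2 := by
  obtain ⟨m, hm⟩ : ∃ m, ∫ x in a..b, f x = m := ⟨_, rfl⟩
  have hvar : 0 ≤ ∫ x in a..b, ((b - a) * f x - m) ^ 2 :=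
    intervalIntegral.integral_nonneg hab fun x _ => sq_nonneg _
  have hexpand : ∫ x in a..b, ((b - a) * f x - m) ^ 2
      = (b - a) * ((b - a) * (∫ x in a..b, f x ^ 2) - m ^ 2) := by
    have hpt : (fun x => ((b - a) * f x - m) ^ 2)
        = fun x => (b - a) ^ 2 * f x ^ 2 - 2 * (b - a) * m * f x + m ^ 2 := by
      ext; ring
    rw [hpt, intervalIntegral.integral_add (Continuous.intervalIntegrable (by fun_prop) _ _)
        intervalIntegrable_const,
      intervalIntegral.integral_sub (Continuous.intervalIntegrable (by fun_prop) _ _)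
        (Continuous.intervalIntegrable (by fun_prop) _ _),
      intervalIntegral.integral_const_mul, intervalIntegral.integral_const_mul,
      intervalIntegral.integral_const, smul_eq_mul, hm]
    ring
  rw [hm]
  rcases hab.eq_or_lt with rfl | hlt
  · simp [← hm]
  · rw [hexpand] at hvar
    nlinarith

lemma hasDerivAt_mul_exp_sq_div_two {ψ : ℝ → ℝ} {ψ' t : ℝ} (h : HasDerivAt ψ ψ' t) (B : ℝ) :
    HasDerivAt (fun t => ψ t * exp (B * t ^ 2 / 2))
      ((ψ' + B * t * ψ t) * exp (B * t ^ 2 / 2)) t := by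
  refine (h.mul (((hasDerivAt_pow 2 t).const_mul B).div_const 2).exp).congr_deriv ?_
  push_cast
  ring

lemma integral_energy_eq {ψ : ℝ → ℝ} (hψ : ContDiff ℝ 1 ψ) {a b : ℝ} (ha : ψ a = 0)
    (hb : ψ b = 0) (B : ℝ) :
    ∫ u in a..b, (deriv ψ u ^ 2 + B ^ 2 * u ^ 2 * ψ u ^ 2)
      = B * (∫ u in a..b, ψ u ^ 2) + ∫ u in a..b, (deriv ψ u + B * u * ψ u) ^ 2 := by
  have := hψ.continuous
  have := hψ.continuous_deriv le_rfl
  have hderiv : ∀ u, HasDerivAt (fun u => B * u * ψ u ^ 2)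
      (B * ψ u ^ 2 + 2 * B * u * ψ u * deriv ψ u) u := fun u => by
    refine ((hasDerivAt_id' u).const_mul B |>.mul
      (((hψ.differentiable one_ne_zero) u).hasDerivAt.pow 2)).congr_deriv ?_
    simp only [Pi.pow_apply, Nat.cast_ofNat]
    ring
  have hboundary : ∫ u in a..b, (B * ψ u ^ 2 + 2 * B * u * ψ u * deriv ψ u) = 0 := by
    rw [intervalIntegral.integral_eq_sub_of_hasDerivAt (fun u _ => hderiv u)
      (Continuous.intervalIntegrable (by fun_prop) _ _)]
    simp [ha, hb]
  calc ∫ u in a..b, (deriv ψ u ^ 2 + B ^ 2 * u ^ 2 * ψ u ^ 2)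
      = ∫ u in a..b, (B * ψ u ^ 2 + (deriv ψ u + B * u * ψ u) ^ 2
          - (B * ψ u ^ 2 + 2 * B * u * ψ u * deriv ψ u)) := by
        congr 1; ext u; ring
    _ = _ := by
        rw [intervalIntegral.integral_sub (Continuous.intervalIntegrable (by fun_prop) _ _)
          (Continuous.intervalIntegrable (by fun_prop) _ _),
          intervalIntegral.integral_add (Continuous.intervalIntegrable (by fun_prop) _ _)
          (Continuous.intervalIntegrable (by fun_prop) _ _),
          hboundary, intervalIntegral.integral_const_mul, sub_zero]

lemma sq_le_two_exp_mul_integral {ψ : ℝ → ℝ} (hψ : ContDiff ℝ 1 ψ) (h1 : ψ 1 = 0) {B u : ℝ}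
    (hB : 0 ≤ B) (hu : u ∈ Icc (-1 : ℝ) 1) :
    ψ u ^ 2 ≤ 2 * exp B * ∫ t in (-1 : ℝ)..1, (deriv ψ t + B * t * ψ t) ^ 2 := by
  have := hψ.continuous
  have := hψ.continuous_deriv le_rfl
  set w : ℝ → ℝ := fun t => deriv ψ t + B * t * ψ t
  have hftc : ∫ t in u..1, w t * exp (B * t ^ 2 / 2) = -(ψ u * exp (B * u ^ 2 / 2)) := by
    rw [intervalIntegral.integral_eq_sub_of_hasDerivAt
      (fun t _ => hasDerivAt_mul_exp_sq_div_two ((hψ.differentiable one_ne_zero) t).hasDerivAt B)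
      (Continuous.intervalIntegrable (by fun_prop) _ _), h1, zero_mul, zero_sub]
  have hweight : ∀ t ∈ Icc (-1 : ℝ) 1, (w t * exp (B * t ^ 2 / 2)) ^ 2 ≤ exp B * w t ^ 2 := by
    intro t ht
    have ht2 : t ^ 2 ≤ 1 := sq_le_one_iff_abs_le_one t |>.2 (abs_le.2 ht)
    rw [mul_pow, ← exp_nat_mul, mul_comm]
    gcongr
    push_cast
    nlinarith
  calc ψ u ^ 2 ≤ (ψ u * exp (B * u ^ 2 / 2)) ^ 2 := by
        rw [mul_pow]
        exact le_mul_of_one_le_right (sq_nonneg _) (one_le_pow₀ (one_le_exp (by positivity)))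
    _ = (∫ t in u..1, w t * exp (B * t ^ 2 / 2)) ^ 2 := by rw [hftc, neg_sq]
    _ ≤ (1 - u) * ∫ t in u..1, (w t * exp (B * t ^ 2 / 2)) ^ 2 :=
        sq_intervalIntegral_le (by fun_prop) hu.2
    _ ≤ 2 * ∫ t in u..1, exp B * w t ^ 2 := by
        refine mul_le_mul (by linarith [hu.1]) ?_
          (intervalIntegral.integral_nonneg hu.2 fun _ _ => sq_nonneg _) zero_le_two
        exact intervalIntegral.integral_mono_on hu.2
          (Continuous.intervalIntegrable (by fun_prop) _ _)
          (Continuous.intervalIntegrable (by fun_prop) _ _)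
          fun t ht => hweight t ⟨hu.1.trans ht.1, ht.2⟩
    _ ≤ 2 * ∫ t in (-1 : ℝ)..1, exp B * w t ^ 2 := by
        gcongr
        exact intervalIntegral.integral_mono_interval hu.1 hu.2 le_rfl
          (Eventually.of_forall fun t => by positivity)
          (Continuous.intervalIntegrable (by fun_prop) _ _)
    _ = 2 * exp B * ∫ t in (-1 : ℝ)..1, w t ^ 2 := by
        rw [intervalIntegral.integral_const_mul, mul_assoc]

lemma add_exp_neg_div_four_le_integral_energy {ψ : ℝ → ℝ} (hψ : ContDiff ℝ 1 ψ)
    (hz : ∀ u : ℝ, 1 ≤ |u| → ψ u = 0) (hn : ∫ u in (-1 : ℝ)..1, ψ u ^ 2 = 1) {B : ℝ}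
    (hB : 0 ≤ B) :
    B + exp (-B) / 4 ≤ ∫ u in (-1 : ℝ)..1, (deriv ψ u ^ 2 + B ^ 2 * u ^ 2 * ψ u ^ 2) := by
  have h1 : ψ 1 = 0 := hz 1 (by norm_num)
  rw [integral_energy_eq hψ (hz (-1) (by norm_num)) h1, hn, mul_one]
  set ε := ∫ u in (-1 : ℝ)..1, (deriv ψ u + B * u * ψ u) ^ 2
  have hmass : 1 ≤ 2 * (2 * exp B * ε) := by
    have h : ∫ u in (-1 : ℝ)..1, ψ u ^ 2 ≤ ∫ _ in (-1 : ℝ)..1, 2 * exp B * ε :=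
      intervalIntegral.integral_mono_on (by norm_num)
        (Continuous.intervalIntegrable (by have := hψ.continuous; fun_prop) _ _)
        intervalIntegrable_const fun u hu => sq_le_two_exp_mul_integral hψ h1 hB hu
    rwa [hn, intervalIntegral.integral_const, smul_eq_mul, sub_neg_eq_add, one_add_one_eq_two]
      at h
  have hε : exp (-B) / 4 ≤ ε :=
    calc exp (-B) / 4 ≤ exp (-B) * (2 * (2 * exp B * ε)) / 4 := by
          gcongr
          exact le_mul_of_one_le_right (exp_pos _).le hmass
      _ = ε := by rw [exp_neg]; field_simp; ring
  linarith

lemma integral_mul_exp_neg_sq_le {g : ℝ → ℝ} (hg : Continuous g) (hg0 : ∀ u, 0 ≤ g u) {r B : ℝ}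
    (hr : 0 ≤ r) (hgr : ∀ u, |u| < r → g u = 0) (hB : 0 ≤ B) :
    ∫ u in (-1 : ℝ)..1, g u * exp (-B * u ^ 2) ≤ exp (-(r ^ 2 * B)) * ∫ u in (-1 : ℝ)..1, g u := by
  rw [← intervalIntegral.integral_const_mul]
  refine intervalIntegral.integral_mono_on (by norm_num)
    (Continuous.intervalIntegrable (by fun_prop) _ _)
    (Continuous.intervalIntegrable (by fun_prop) _ _) fun u _ => ?_
  rcases lt_or_ge |u| r with hu | hu
  · simp [hgr u hu]
  · have hru : r ^ 2 ≤ u ^ 2 := by rw [← sq_abs u]; gcongr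
    rw [mul_comm (exp _)]
    exact mul_le_mul_of_nonneg_left (exp_le_exp.2 (by nlinarith)) (hg0 u)

lemma two_mul_mul_exp_neg_one_le_integral {g : ℝ → ℝ} (hg : Continuous g) (hg0 : ∀ u, 0 ≤ g u)
    {s B : ℝ} (hs : 0 ≤ s) (hs1 : s ≤ 1) (hsB : B * s ^ 2 ≤ 1)
    (hgs : ∀ u ∈ Icc (-s) s, 1 ≤ g u) :
    2 * s * exp (-1) ≤ ∫ u in (-1 : ℝ)..1, g u * exp (-B * u ^ 2) := by
  calc 2 * s * exp (-1) = ∫ _ in -s..s, exp (-1) := by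
        rw [intervalIntegral.integral_const, smul_eq_mul]; ring
    _ ≤ ∫ u in -s..s, g u * exp (-B * u ^ 2) := by
        refine intervalIntegral.integral_mono_on (by linarith) intervalIntegrable_const
          (Continuous.intervalIntegrable (by fun_prop) _ _) fun u hu => ?_
        have hu2 : u ^ 2 ≤ s ^ 2 := sq_le_sq' hu.1 hu.2
        have hexp : -1 ≤ -B * u ^ 2 := by
          rcases le_or_gt 0 B with hB | hB
          · nlinarith [mul_le_mul_of_nonneg_left hu2 hB]
          · nlinarith [sq_nonneg u]
        rw [← one_mul (exp (-1))]
        exact mul_le_mul (hgs u hu) (exp_le_exp.2 hexp) (exp_pos _).le (hg0 u)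
    _ ≤ ∫ u in (-1 : ℝ)..1, g u * exp (-B * u ^ 2) :=
        intervalIntegral.integral_mono_interval (by linarith) (by linarith) hs1
          (Eventually.of_forall fun u => mul_nonneg (hg0 u) (exp_pos _).le)
          (Continuous.intervalIntegrable (by fun_prop) _ _)

def dirichletHOEnergies (B₀ : ℝ) : Set ℝ :=
  {E : ℝ | ∃ ψ : ℝ → ℝ, ContDiff ℝ 1 ψ ∧ (∀ u : ℝ, 1 ≤ |u| → ψ u = 0) ∧
    (∫ u in Set.Ioo (-1 : ℝ) 1, (ψ u) ^ 2) = 1 ∧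
    E = ∫ u in Set.Ioo (-1 : ℝ) 1, ((deriv ψ u) ^ 2 + B₀ ^ 2 * u ^ 2 * (ψ u) ^ 2)}

lemma dirichletHOGroundEnergy_eq_sInf (B₀ : ℝ) :
    dirichletHOGroundEnergy B₀ = sInf (dirichletHOEnergies B₀) := rfl

lemma add_exp_neg_div_four_le_of_mem_dirichletHOEnergies {B E : ℝ} (hB : 0 ≤ B)
    (hE : E ∈ dirichletHOEnergies B) : B + exp (-B) / 4 ≤ E := by
  obtain ⟨ψ, hψ, hz, hn, rfl⟩ := hE
  rw [integral_Ioo_neg_one_one] at hn ⊢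
  exact add_exp_neg_div_four_le_integral_energy hψ hz hn hB

lemma div_mem_dirichletHOEnergies {φ : ℝ → ℝ} (hφ : ContDiff ℝ 1 φ)
    (hz : ∀ u : ℝ, 1 ≤ |u| → φ u = 0) (hD : 0 < ∫ u in (-1 : ℝ)..1, φ u ^ 2) (B : ℝ) :
    (∫ u in (-1 : ℝ)..1, (deriv φ u ^ 2 + B ^ 2 * u ^ 2 * φ u ^ 2)) /
      (∫ u in (-1 : ℝ)..1, φ u ^ 2) ∈ dirichletHOEnergies B := by
  set c := (√(∫ u in (-1 : ℝ)..1, φ u ^ 2))⁻¹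
  have hc : c ^ 2 = (∫ u in (-1 : ℝ)..1, φ u ^ 2)⁻¹ := by rw [inv_pow, sq_sqrt hD.le]
  have hderiv : ∀ u, deriv (fun u => c * φ u) u = c * deriv φ u := fun u =>
    deriv_const_mul _ (hφ.differentiable one_ne_zero u)
  refine ⟨fun u => c * φ u, contDiff_const.mul hφ, fun u hu => by simp [hz u hu], ?_, ?_⟩
  · simp_rw [integral_Ioo_neg_one_one, mul_pow]
    rw [intervalIntegral.integral_const_mul, hc, inv_mul_cancel₀ hD.ne']
  · simp_rw [integral_Ioo_neg_one_one, hderiv, div_eq_inv_mul, ← hc,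
      ← intervalIntegral.integral_const_mul]
    congr 1; ext u; ring

lemma exp_div_two_sq (x : ℝ) : exp (x / 2) ^ 2 = exp x := by
  rw [← exp_nat_mul]; ring_nf

lemma deriv_eq_zero_of_abs_lt_rIn (f : ContDiffBump (0 : ℝ)) {u : ℝ} (hu : |u| < f.rIn) :
    deriv f u = 0 := by
  have hball : u ∈ Metric.ball (0 : ℝ) f.rIn := by simpa using hu
  rw [(f.eventuallyEq_one_of_mem_ball hball).deriv_eq, Pi.one_def, deriv_const]

lemma exists_rayleigh_quotient_le (f : ContDiffBump (0 : ℝ)) (hf : f.rOut ≤ 1) {B : ℝ}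
    (hB : 1 ≤ f.rIn ^ 2 * B) :
    ∃ φ : ℝ → ℝ, ContDiff ℝ 1 φ ∧ (∀ u : ℝ, 1 ≤ |u| → φ u = 0) ∧
      0 < ∫ u in (-1 : ℝ)..1, φ u ^ 2 ∧
      (∫ u in (-1 : ℝ)..1, (deriv φ u ^ 2 + B ^ 2 * u ^ 2 * φ u ^ 2)) /
          (∫ u in (-1 : ℝ)..1, φ u ^ 2)
        ≤ B + exp 1 / 2 * (∫ u in (-1 : ℝ)..1, deriv f u ^ 2) * √B *
            exp (-(f.rIn ^ 2 * B)) := by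
  have hr := f.rIn_pos
  have hr1 : f.rIn < 1 := f.rIn_lt_rOut.trans_le hf
  have hB1 : 1 ≤ B := by nlinarith
  have hf1 : ContDiff ℝ 1 f := f.contDiff
  have := hf1.continuous_deriv le_rfl
  set φ : ℝ → ℝ := fun u => f u * exp (-B * u ^ 2 / 2)
  have hφ : ContDiff ℝ 1 φ := hf1.mul (by fun_prop)
  have hz : ∀ u : ℝ, 1 ≤ |u| → φ u = 0 := fun u hu => by
    simp [φ, f.zero_of_le_dist (by rw [dist_zero_right, norm_eq_abs]; linarith)]
  have hsq : ∀ g : ℝ → ℝ, ∀ u, (g u * exp (-B * u ^ 2 / 2)) ^ 2 = g u ^ 2 * exp (-B * u ^ 2) :=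
    fun g u => by rw [mul_pow, exp_div_two_sq]
  have hground : ∀ u, deriv φ u + B * u * φ u = deriv f u * exp (-B * u ^ 2 / 2) := fun u => by
    rw [(hasDerivAt_mul_exp_sq_div_two (hf1.differentiable one_ne_zero u).hasDerivAt (-B)).deriv]
    ring
  set D := ∫ u in (-1 : ℝ)..1, f u ^ 2 * exp (-B * u ^ 2)
  set N := ∫ u in (-1 : ℝ)..1, deriv f u ^ 2 * exp (-B * u ^ 2)
  have hφD : ∫ u in (-1 : ℝ)..1, φ u ^ 2 = D := by simp_rw [φ, hsq]; rfl
  have hE : ∫ u in (-1 : ℝ)..1, (deriv φ u ^ 2 + B ^ 2 * u ^ 2 * φ u ^ 2) = B * D + N := by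
    rw [integral_energy_eq hφ (hz _ (by norm_num)) (hz _ (by norm_num)), hφD]
    simp_rw [hground, hsq]
    rfl
  have hN : N ≤ exp (-(f.rIn ^ 2 * B)) * ∫ u in (-1 : ℝ)..1, deriv f u ^ 2 :=
    integral_mul_exp_neg_sq_le (by fun_prop) (fun u => sq_nonneg _) hr.le
      (fun u hu => by simp [deriv_eq_zero_of_abs_lt_rIn f hu]) (by linarith)
  have hsB : (√B)⁻¹ ≤ f.rIn := by
    rw [inv_le_iff_one_le_mul₀ (by positivity), ← sqrt_sq hr.le, ← sqrt_mul (sq_nonneg _)]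
    exact one_le_sqrt.2 hB
  have hD : 2 * (√B)⁻¹ * exp (-1) ≤ D :=
    two_mul_mul_exp_neg_one_le_integral (by fun_prop) (fun u => sq_nonneg _) (by positivity)
      (hsB.trans hr1.le) (by rw [inv_pow, sq_sqrt (by linarith), mul_inv_cancel₀ (by positivity)])
      fun u hu => by
        rw [f.one_of_mem_closedBall (by simpa [abs_le] using ⟨by linarith [hu.1], hu.2.trans hsB⟩),
          one_pow]
  have hDpos : 0 < D := lt_of_lt_of_le (by positivity) hD
  have hK : 0 ≤ ∫ u in (-1 : ℝ)..1, deriv f u ^ 2 :=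
    intervalIntegral.integral_nonneg (by norm_num) fun _ _ => sq_nonneg _
  refine ⟨φ, hφ, hz, hφD ▸ hDpos, ?_⟩
  rw [hE, hφD, add_div, mul_div_cancel_right₀ _ hDpos.ne']
  gcongr
  calc N / D ≤ exp (-(f.rIn ^ 2 * B)) * (∫ u in (-1 : ℝ)..1, deriv f u ^ 2) /
        (2 * (√B)⁻¹ * exp (-1)) := div_le_div₀ (by positivity) hN (by positivity) hD
    _ = _ := by rw [exp_neg 1]; field_simp

lemma dirichletHOGroundEnergy_bounds (f : ContDiffBump (0 : ℝ)) (hf : f.rOut ≤ 1) {B : ℝ}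
    (hB : 1 ≤ f.rIn ^ 2 * B) :
    B + exp (-B) / 4 ≤ dirichletHOGroundEnergy B ∧
      dirichletHOGroundEnergy B ≤
        B + exp 1 / 2 * (∫ u in (-1 : ℝ)..1, deriv f u ^ 2) * √B * exp (-(f.rIn ^ 2 * B)) := by
  have hB0 : 0 ≤ B := by nlinarith [f.rIn_pos]
  obtain ⟨φ, hφ, hz, hD, hle⟩ := exists_rayleigh_quotient_le f hf hB
  have hmem := div_mem_dirichletHOEnergies hφ hz hD B
  have hlower : ∀ E ∈ dirichletHOEnergies B, B + exp (-B) / 4 ≤ E := fun _ hE =>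
    add_exp_neg_div_four_le_of_mem_dirichletHOEnergies hB0 hE
  rw [dirichletHOGroundEnergy_eq_sInf]
  exact ⟨le_csInf ⟨_, hmem⟩ hlower, (csInf_le ⟨_, hlower⟩ hmem).trans hle⟩

lemma eventually_mul_sqrt_mul_exp_le (C : ℝ) {A a : ℝ} (hA : 0 < A) (ha : 1 / 2 < a) :
    ∀ᶠ B in atTop, C * √B * exp (-(a * B)) ≤ A * B ^ ((5 : ℝ) / 4) * exp (-B / 2) := by
  have hsmall : Tendsto (fun B => C * exp (-((a - 1 / 2) * B))) atTop (𝓝 0) := by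
    simpa using (tendsto_exp_neg_atTop_nhds_zero.comp
      (tendsto_id.const_mul_atTop (sub_pos.2 ha))).const_mul C
  filter_upwards [hsmall.eventually_lt_const hA, eventually_ge_atTop 1] with B hCA hB
  have hsplit : exp (-(a * B)) = exp (-((a - 1 / 2) * B)) * exp (-B / 2) := by
    rw [← exp_add]; ring_nf
  calc C * √B * exp (-(a * B)) = C * exp (-((a - 1 / 2) * B)) * (√B * exp (-B / 2)) := by
        rw [hsplit]; ring
    _ ≤ A * (√B * exp (-B / 2)) := by gcongr
    _ ≤ A * (B ^ ((5 : ℝ) / 4) * exp (-B / 2)) := by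
        gcongr
        rw [sqrt_eq_rpow]
        exact rpow_le_rpow_of_exponent_le hB (by norm_num)
    _ = A * B ^ ((5 : ℝ) / 4) * exp (-B / 2) := by ring

/-- `B₀ < μ(B₀,1) ≤ B₀ + (1+δ)·(√2/π^{1/4})·B₀^{5/4}e^{−B₀/2}` for large
`B₀`, hence `μ(B₀,1) = B₀ + O(B₀^{5/4}e^{−B₀/2})` as `B₀ → +∞`. -/
theorem dirichletHOGroundEnergy_asymptotics :
    (∀ δ : ℝ, 0 < δ → ∀ᶠ B₀ : ℝ in atTop,
      B₀ < dirichletHOGroundEnergy B₀ ∧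
      dirichletHOGroundEnergy B₀ ≤
        B₀ + (1 + δ) * (Real.sqrt 2 / Real.pi ^ ((1 : ℝ) / 4)) *
          B₀ ^ ((5 : ℝ) / 4) * Real.exp (-B₀ / 2)) ∧
    ∃ c : ℝ, ∀ᶠ B₀ : ℝ in atTop,
      |dirichletHOGroundEnergy B₀ - B₀| ≤ c * B₀ ^ ((5 : ℝ) / 4) * Real.exp (-B₀ / 2) := by
  let f : ContDiffBump (0 : ℝ) := ⟨3 / 4, 1, by norm_num, by norm_num⟩
  have hrIn : (1 : ℝ) / 2 < f.rIn ^ 2 := by norm_num [f]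
  have hlarge : ∀ᶠ B in atTop, 1 ≤ f.rIn ^ 2 * B :=
    (tendsto_id.const_mul_atTop (by positivity)).eventually_ge_atTop 1
  have hbounds : ∀ δ : ℝ, 0 < δ → ∀ᶠ B₀ : ℝ in atTop,
      B₀ < dirichletHOGroundEnergy B₀ ∧
      dirichletHOGroundEnergy B₀ ≤ B₀ + (1 + δ) * (√2 / π ^ ((1 : ℝ) / 4)) *
        B₀ ^ ((5 : ℝ) / 4) * exp (-B₀ / 2) := fun δ hδ => by
    have hA : 0 < (1 + δ) * (√2 / π ^ ((1 : ℝ) / 4)) := by positivity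
    filter_upwards [hlarge, eventually_mul_sqrt_mul_exp_le
      (exp 1 / 2 * ∫ u in (-1 : ℝ)..1, deriv f u ^ 2) hA hrIn] with B hB hcmp
    obtain ⟨hlo, hup⟩ := dirichletHOGroundEnergy_bounds f le_rfl hB
    exact ⟨by linarith [exp_pos (-B)], by linarith⟩
  refine ⟨hbounds, 2 * (√2 / π ^ ((1 : ℝ) / 4)), ?_⟩
  filter_upwards [hbounds 1 one_pos] with B ⟨hlt, hle⟩
  rw [abs_of_pos (sub_pos.2 hlt)]
  linarith
end
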